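/- arXiv:0905.3701 — 3 statements merged into one kernel-verified Lean document; each statement's English description precedes it below -/
import Mathlib

section
/- In the generalised CEV setting, the endpoint 0 is good if and only if 2β − α < 1; that is, the two conditions 's̃(0) := lim_{x↓0} s̃(x) > −∞' and '(s̃(x) − s̃(0))·b²(x)/(ρ̃(x)σ²(x)) is integrable on (0,z) for some z ∈ (0,∞)' hold simultaneously if and only if 2β − α < 1. Moreover the endpoint ∞ is never good, since s̃(∞) := lim_{x↑∞} s̃(x) = ∞. -/
open MeasureTheory Set Filter Topology

/-!
The drift correction `b = -μ/σ` makes the two exponents defining `ρ̃` cancel, so `ρ̃ ≡ 1` and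
`s̃(x) = x - c`. Hence `s̃(0) = -c` is finite, `s̃(∞) = ∞`, and the integrand of the goodness
condition at `0` is `x · b²/σ² = (μ₀²/σ₀⁴) x^(1 + 2α - 4β)`, which is integrable near `0`
exactly when `1 + 2α - 4β > -1`, i.e. `2β - α < 1`.
-/

lemma cev_drift_ratio_eq (α β μ0 σ0 : ℝ) {y : ℝ} (hy : 0 < y) :
    2 * (-(μ0 / σ0) * y ^ (α - β)) / (σ0 * y ^ β)
      = -(2 * (μ0 * y ^ α) / (σ0 * y ^ β) ^ 2) := by
  have hyβ : y ^ β ≠ 0 := (Real.rpow_pos_of_pos hy β).ne'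
  rw [Real.rpow_sub hy]
  rcases eq_or_ne σ0 0 with rfl | hσ0
  · simp
  · field_simp

lemma cev_integrand_eq (α β μ0 σ0 : ℝ) {x : ℝ} (hσ0 : σ0 ≠ 0) (hx : 0 < x) :
    x * (-(μ0 / σ0) * x ^ (α - β)) ^ 2 / (σ0 * x ^ β) ^ 2
      = μ0 ^ 2 / σ0 ^ 4 * x ^ (1 + 2 * α - 4 * β) := by
  have hxβ : x ^ β ≠ 0 := (Real.rpow_pos_of_pos hx β).ne'
  have hexp : x ^ (1 + 2 * α - 4 * β) * (x ^ β) ^ 4 = x * (x ^ α) ^ 2 := by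
    simp only [← Real.rpow_natCast, ← Real.rpow_mul hx.le, ← Real.rpow_add hx]
    ring_nf
    rw [Real.rpow_add hx, Real.rpow_one]
  rw [Real.rpow_sub hx]
  field_simp
  linear_combination -μ0 ^ 2 * hexp

lemma integrableOn_Ioo_const_mul_rpow_iff {K r z : ℝ} (hK : K ≠ 0) (hz : 0 < z) :
    IntegrableOn (fun x => K * x ^ r) (Ioo 0 z) ↔ -1 < r := by
  rw [IntegrableOn, integrable_const_mul_iff (IsUnit.mk0 K hK)]
  exact intervalIntegral.integrableOn_Ioo_rpow_iff hz

lemma uIcc_subset_Ioi_zero {c x : ℝ} (hc : 0 < c) (hx : 0 < x) : uIcc c x ⊆ Ioi 0 :=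
  fun _ hy => lt_of_lt_of_le (lt_min hc hx) hy.1

lemma integral_eq_sub_of_eqOn_one {f : ℝ → ℝ} {c x : ℝ} (hc : 0 < c) (hx : 0 < x)
    (hf : EqOn f 1 (Ioi 0)) : ∫ y in c..x, f y = x - c := by
  rw [intervalIntegral.integral_congr (hf.mono (uIcc_subset_Ioi_zero hc hx))]
  simp

lemma cev_scaleDensity_eq_one {c α β μ0 σ0 : ℝ} (hc : 0 < c) {ρ ρt : ℝ → ℝ}
    (hρ : ∀ x ∈ Ioi (0 : ℝ),
      ρ x = Real.exp (-(∫ y in c..x, 2 * (μ0 * y ^ α) / (σ0 * y ^ β) ^ 2)))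
    (hρt : ∀ x ∈ Ioi (0 : ℝ),
      ρt x = ρ x * Real.exp (-(∫ y in c..x, 2 * (-(μ0 / σ0) * y ^ (α - β)) / (σ0 * y ^ β)))) :
    EqOn ρt 1 (Ioi 0) := by
  intro x hx
  have hdrift : (∫ y in c..x, 2 * (-(μ0 / σ0) * y ^ (α - β)) / (σ0 * y ^ β))
      = ∫ y in c..x, -(2 * (μ0 * y ^ α) / (σ0 * y ^ β) ^ 2) :=
    intervalIntegral.integral_congr fun y hy =>
      cev_drift_ratio_eq α β μ0 σ0 (uIcc_subset_Ioi_zero hc hx hy)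
  rw [hρt x hx, hρ x hx, hdrift, intervalIntegral.integral_neg, neg_neg, ← Real.exp_add,
    neg_add_cancel, Real.exp_zero, Pi.one_apply]

/-- **Generalised CEV model: the endpoint `0` is good iff `2β - α < 1`, and the endpoint `∞`
is never good.**  On `J = (0, ∞)`, with `μ(x) = μ₀ x^α`, `σ(x) = σ₀ x^β`,
`b(x) = -(μ₀/σ₀) x^(α-β)`, `ρ(x) = exp(-∫_c^x 2μ/σ²)`, `ρ̃(x) = ρ(x)·exp(-∫_c^x 2b/σ)` and
`s̃(x) = ∫_c^x ρ̃`: the two conditions `s̃(0) = lim_{x ↓ 0} s̃(x) > -∞` (i.e. `s̃` converges to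
a finite limit `L` as `x ↓ 0`) and `(s̃ - s̃(0))·b²/(ρ̃σ²)` integrable on `(0, z)` for some
`z ∈ (0,∞)` hold simultaneously iff `2β - α < 1`; moreover
`s̃(∞) = lim_{x ↑ ∞} s̃(x) = ∞`. -/
theorem generalised_cev_zero_good_iff
    (c : ℝ) (hc : 0 < c) (α β : ℝ) (μ0 : ℝ) (hμ0 : μ0 ≠ 0) (σ0 : ℝ) (hσ0 : 0 < σ0)
    (ρ ρt st : ℝ → ℝ)
    (hρ : ∀ x ∈ Ioi (0 : ℝ),
      ρ x = Real.exp (-(∫ y in c..x, 2 * (μ0 * y ^ α) / (σ0 * y ^ β) ^ 2)))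
    (hρt : ∀ x ∈ Ioi (0 : ℝ),
      ρt x = ρ x * Real.exp (-(∫ y in c..x, 2 * (-(μ0 / σ0) * y ^ (α - β)) / (σ0 * y ^ β))))
    (hst : ∀ x ∈ Ioi (0 : ℝ), st x = ∫ y in c..x, ρt y) :
    ((∃ L : ℝ, Tendsto st (nhdsWithin 0 (Ioi 0)) (nhds L) ∧
        ∃ z ∈ Ioi (0 : ℝ), IntegrableOn
          (fun x => (st x - L) * (-(μ0 / σ0) * x ^ (α - β)) ^ 2 / (ρt x * (σ0 * x ^ β) ^ 2))
          (Ioo 0 z) volume) ↔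
      2 * β - α < 1) ∧
    Tendsto st atTop atTop := by
  have hρt1 : EqOn ρt 1 (Ioi 0) := cev_scaleDensity_eq_one hc hρ hρt
  have hst1 : EqOn st (· - c) (Ioi 0) := fun x hx =>
    (hst x hx).trans (integral_eq_sub_of_eqOn_one hc hx hρt1)
  have hlim : Tendsto st (𝓝[>] 0) (𝓝 (-c)) := by
    refine tendsto_nhdsWithin_congr (fun x hx => (hst1 hx).symm) ?_
    simpa using ((continuous_sub_right c).tendsto 0).mono_left nhdsWithin_le_nhds
  have hintegrand : ∀ z, EqOn
      (fun x => (st x - -c) * (-(μ0 / σ0) * x ^ (α - β)) ^ 2 / (ρt x * (σ0 * x ^ β) ^ 2))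
      (fun x => μ0 ^ 2 / σ0 ^ 4 * x ^ (1 + 2 * α - 4 * β)) (Ioo 0 z) := fun z x hx => by
    simp only [hst1 hx.1, hρt1 hx.1, Pi.one_apply, one_mul, sub_neg_eq_add, sub_add_cancel]
    exact cev_integrand_eq α β μ0 σ0 hσ0.ne' hx.1
  have hgood : ∀ z ∈ Ioi (0 : ℝ), IntegrableOn
      (fun x => (st x - -c) * (-(μ0 / σ0) * x ^ (α - β)) ^ 2 / (ρt x * (σ0 * x ^ β) ^ 2))
      (Ioo 0 z) ↔ 2 * β - α < 1 := fun z hz => by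
    rw [integrableOn_congr_fun (hintegrand z) measurableSet_Ioo,
      integrableOn_Ioo_const_mul_rpow_iff (by positivity) hz]
    constructor <;> intro h <;> linarith
  refine ⟨⟨fun ⟨L, hL, z, hz, hint⟩ => ?_, fun h => ⟨-c, hlim, c, hc, (hgood c hc).2 h⟩⟩, ?_⟩
  · rw [tendsto_nhds_unique hL hlim] at hint
    exact (hgood z hz).1 hint
  · exact (tendsto_atTop_add_const_right _ (-c) tendsto_id).congr'
      (eventually_gt_atTop 0 |>.mono fun x hx => (hst1 hx).symm)
end

section
/- In the CEV model setting with α < 1: (i) s̃(0) := lim_{x↓0} s̃(x) = −∞; and (ii) the endpoint ∞ is good if and only if μ0 > 0; that is, the two conditions 's(∞) := lim_{x↑∞} s(x) < ∞' and '(s(∞) − s(x))·b²(x)/(ρ(x)σ²(x)) = (s(∞) − s(x))/(ρ(x)x²) is integrable on (z,∞) for some z ∈ (0,∞)' hold simultaneously if and only if μ0 > 0. -/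
open MeasureTheory Set Filter Topology

/-!
With `β = 2 - 2α > 0` and `K = 2μ₀/(σ₀²β)`, the scale density is explicit,
`ρ x = exp (K (c^β - x^β))`, and `ρ̃ x = c² ρ x / x²`. Near `0` the density `ρ` is bounded away
from `0`, so `s̃` diverges like `-1/x`. At `∞`, if `μ₀ ≤ 0` then `ρ ≥ 1` and `s` diverges; if
`μ₀ > 0`, comparing with the derivative of `x^(1-β) ρ x` gives the tail bound
`∫_x^∞ ρ ≲ x^(1-β) ρ x`, so the integrand of the goodness condition is `O(x^(-1-β))`.
-/

-- The closed form of `ρ`: `ρ x = cevScaleDensity K β c x` with `β = 2 - 2α`, `K = 2μ₀/(σ₀²β)`.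
noncomputable def cevScaleDensity (K β c x : ℝ) : ℝ := Real.exp (K * (c ^ β - x ^ β))

lemma pos_of_mem_uIcc {a b y : ℝ} (ha : 0 < a) (hb : 0 < b) (hy : y ∈ uIcc a b) : 0 < y :=
  (lt_min ha hb).trans_le hy.1

lemma exp_neg_integral_drift {c x : ℝ} (hc : 0 < c) (hx : 0 < x) {α : ℝ} (hα : α ≠ 1) (μ0 : ℝ)
    (σ0 : ℝ) :
    Real.exp (-(∫ y in c..x, 2 * (μ0 * y) / (σ0 * y ^ α) ^ 2)) =
      cevScaleDensity (2 * μ0 / σ0 ^ 2 / (2 - 2 * α)) (2 - 2 * α) c x := by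
  have hβ : (2 : ℝ) - 2 * α ≠ 0 := by contrapose! hα; linarith
  have h0 : (0 : ℝ) ∉ uIcc c x := fun h => (pos_of_mem_uIcc hc hx h).false
  have hintegrand : ∀ y ∈ uIcc c x,
      2 * (μ0 * y) / (σ0 * y ^ α) ^ 2 = 2 * μ0 / σ0 ^ 2 * y ^ (1 - 2 * α) := by
    intro y hy
    have hy0 := pos_of_mem_uIcc hc hx hy
    rw [mul_pow, ← Real.rpow_natCast (y ^ α), ← Real.rpow_mul hy0.le, Real.rpow_sub hy0,
      Real.rpow_one, Nat.cast_ofNat, mul_comm α]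
    field_simp
  rw [intervalIntegral.integral_congr hintegrand, intervalIntegral.integral_const_mul,
    integral_rpow (Or.inr ⟨by contrapose! hα; linarith, h0⟩), cevScaleDensity,
    show 1 - 2 * α + 1 = 2 - 2 * α by ring]
  congr 1
  field_simp
  ring

lemma exp_neg_integral_two_mul_div_self {c x : ℝ} (hc : 0 < c) (hx : 0 < x) (α : ℝ) {σ0 : ℝ}
    (hσ0 : σ0 ≠ 0) :
    Real.exp (-(∫ y in c..x, 2 * (σ0 * y ^ (α - 1)) / (σ0 * y ^ α))) = c ^ 2 / x ^ 2 := by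
  have h0 : (0 : ℝ) ∉ uIcc c x := fun h => (pos_of_mem_uIcc hc hx h).false
  have hintegrand : ∀ y ∈ uIcc c x, 2 * (σ0 * y ^ (α - 1)) / (σ0 * y ^ α) = 2 * (1 / y) := by
    intro y hy
    have hy0 := pos_of_mem_uIcc hc hx hy
    rw [Real.rpow_sub hy0, Real.rpow_one]
    field_simp
  rw [intervalIntegral.integral_congr hintegrand, intervalIntegral.integral_const_mul,
    integral_one_div h0, ← Real.log_rpow (div_pos hx hc), Real.exp_neg,
    Real.exp_log (by positivity)]
  norm_num
  field_simp

lemma cevScaleDensity_pos (K β c x : ℝ) : 0 < cevScaleDensity K β c x := Real.exp_pos _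

lemma continuous_cevScaleDensity (K : ℝ) {β : ℝ} (hβ : 0 ≤ β) (c : ℝ) :
    Continuous (cevScaleDensity K β c) :=
  Real.continuous_exp.comp (continuous_const.mul
    (continuous_const.sub (Real.continuous_rpow_const hβ)))

lemma one_le_cevScaleDensity {K β c y : ℝ} (hK : K ≤ 0) (hβ : 0 ≤ β) (hc : 0 ≤ c) (hcy : c ≤ y) :
    1 ≤ cevScaleDensity K β c y :=
  Real.one_le_exp (mul_nonneg_of_nonpos_of_nonpos hK
    (sub_nonpos.2 (Real.rpow_le_rpow hc hcy hβ)))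

lemma hasDerivAt_cevScaleDensity (K β c : ℝ) {y : ℝ} (hy : 0 < y) :
    HasDerivAt (cevScaleDensity K β c)
      (-(K * β * y ^ (β - 1)) * cevScaleDensity K β c y) y := by
  refine ((((Real.hasDerivAt_rpow_const (p := β) (Or.inl hy.ne')).const_sub (c ^ β)).const_mul
    K).exp).congr_deriv ?_
  simp only [cevScaleDensity]
  ring

lemma tendsto_intervalIntegral_div_sq_nhdsGT_zero {g : ℝ → ℝ} {c : ℝ} (hc : 0 < c)
    (hg : ContinuousOn g (Icc 0 c)) (hg_pos : ∀ y ∈ Icc 0 c, 0 < g y) :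
    Tendsto (fun x => ∫ y in c..x, g y / y ^ 2) (𝓝[>] 0) atBot := by
  obtain ⟨y₀, hy₀, hmin⟩ := isCompact_Icc.exists_isMinOn (nonempty_Icc.2 hc.le) hg
  have hm : 0 < g y₀ := hg_pos y₀ hy₀
  have hbound : ∀ x ∈ Ioo 0 c, ∫ y in c..x, g y / y ^ 2 ≤ -(g y₀ * (x⁻¹ - c⁻¹)) := by
    rintro x ⟨hx, hxc⟩
    have h0 : (0 : ℝ) ∉ uIcc x c := fun h => (pos_of_mem_uIcc hx hc h).false
    have hsq : ContinuousOn (fun y : ℝ => (y ^ 2)⁻¹) (uIcc x c) :=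
      (continuousOn_pow 2).inv₀ fun y hy => pow_ne_zero 2 (pos_of_mem_uIcc hx hc hy).ne'
    have hint : IntervalIntegrable (fun y => g y / y ^ 2) volume x c :=
      ((hg.mono (uIcc_of_le hxc.le ▸ Icc_subset_Icc_left hx.le)).mul hsq).intervalIntegrable
    rw [intervalIntegral.integral_symm, neg_le_neg_iff]
    calc g y₀ * (x⁻¹ - c⁻¹) = ∫ y in x..c, g y₀ / y ^ 2 := by
          simp_rw [div_eq_mul_inv, ← zpow_natCast, ← zpow_neg]
          rw [intervalIntegral.integral_const_mul, integral_zpow (Or.inr ⟨by norm_num, h0⟩)]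
          congr 1
          norm_num
          ring
      _ ≤ ∫ y in x..c, g y / y ^ 2 :=
          intervalIntegral.integral_mono_on hxc.le (hsq.intervalIntegrable.const_mul _) hint
            fun y hy => div_le_div_of_nonneg_right (hmin ⟨hx.le.trans hy.1, hy.2⟩) (sq_nonneg y)
  have hlim : Tendsto (fun x : ℝ => -(g y₀ * (x⁻¹ - c⁻¹))) (𝓝[>] 0) atBot :=
    tendsto_neg_atTop_atBot.comp
      ((tendsto_atTop_add_const_right _ _ tendsto_inv_nhdsGT_zero).const_mul_atTop hm)
  exact tendsto_atBot_mono' _ (eventually_of_mem (Ioo_mem_nhdsGT hc) hbound) hlim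

lemma tendsto_intervalIntegral_atTop_of_one_le {g : ℝ → ℝ} {c : ℝ} (hg : Continuous g)
    (hg_one : ∀ y, c ≤ y → 1 ≤ g y) : Tendsto (fun x => ∫ y in c..x, g y) atTop atTop := by
  refine tendsto_atTop_mono' _ ?_ (tendsto_atTop_add_const_right _ (-c) tendsto_id)
  filter_upwards [eventually_ge_atTop c] with x hx
  have := intervalIntegral.integral_mono_on hx (intervalIntegrable_const (μ := volume))
    (hg.intervalIntegrable c x) fun y hy => hg_one y hy.1
  simpa [sub_eq_add_neg] using this

lemma integrableOn_Ioi_and_integral_le_of_le_neg_deriv {f Φ Φ' : ℝ → ℝ} {a : ℝ}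
    (hΦ : ∀ y ∈ Ici a, HasDerivAt Φ (Φ' y) y) (hΦ_lim : Tendsto Φ atTop (𝓝 0))
    (hf : ContinuousOn f (Ioi a)) (hf_nonneg : ∀ y ∈ Ioi a, 0 ≤ f y)
    (hf_le : ∀ y ∈ Ioi a, f y ≤ -Φ' y) :
    IntegrableOn f (Ioi a) ∧ ∫ y in Ioi a, f y ≤ Φ a := by
  have hΦ'_nonpos : ∀ y ∈ Ioi a, Φ' y ≤ 0 := fun y hy => by
    linarith [hf_nonneg y hy, hf_le y hy]
  have hΦ'_int : IntegrableOn (fun y => -Φ' y) (Ioi a) :=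
    (integrableOn_Ioi_deriv_of_nonpos' hΦ hΦ'_nonpos hΦ_lim).neg
  have hf_int : IntegrableOn f (Ioi a) := by
    refine Integrable.mono' hΦ'_int (hf.aestronglyMeasurable measurableSet_Ioi) ?_
    refine (ae_restrict_iff' measurableSet_Ioi).2 (ae_of_all _ fun y hy => ?_)
    rw [Real.norm_of_nonneg (hf_nonneg y hy)]
    exact hf_le y hy
  refine ⟨hf_int, ?_⟩
  calc ∫ y in Ioi a, f y ≤ ∫ y in Ioi a, -Φ' y :=
        setIntegral_mono_on hf_int hΦ'_int measurableSet_Ioi hf_le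
    _ = Φ a := by
        rw [integral_neg, integral_Ioi_of_hasDerivAt_of_nonpos' hΦ hΦ'_nonpos hΦ_lim]
        ring

lemma tendsto_rpow_mul_exp_neg_mul_rpow_atTop_nhds_zero (s : ℝ) {b p : ℝ} (hb : 0 < b)
    (hp : 0 < p) : Tendsto (fun x : ℝ => x ^ s * Real.exp (-b * x ^ p)) atTop (𝓝 0) := by
  refine ((tendsto_rpow_mul_exp_neg_mul_atTop_nhds_zero (s / p) b hb).comp
    (tendsto_rpow_atTop hp)).congr' ?_
  filter_upwards [eventually_gt_atTop 0] with x hx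
  simp only [Function.comp_apply]
  rw [← Real.rpow_mul hx.le, mul_div_cancel₀ _ hp.ne']

lemma integrableOn_cevScaleDensity {K β : ℝ} (hK : 0 < K) (hβ : 0 < β) (c : ℝ) {a : ℝ}
    (ha : 0 ≤ a) : IntegrableOn (cevScaleDensity K β c) (Ioi a) := by
  have h : IntegrableOn (fun x => Real.exp (K * c ^ β) * (x ^ (0 : ℝ) * Real.exp (-K * x ^ β)))
      (Ioi 0) :=
    (integrableOn_rpow_mul_exp_neg_mul_rpow (by norm_num) hβ hK).const_mul _
  refine (h.mono_set (Ioi_subset_Ioi ha)).congr_fun (fun x _ => ?_) measurableSet_Ioi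
  simp only [Real.rpow_zero, one_mul, ← Real.exp_add, cevScaleDensity]
  ring_nf

lemma exists_integral_Ioi_cevScaleDensity_le {K β : ℝ} (hK : 0 < K) (hβ : 0 < β) (c : ℝ) :
    ∃ R > 0, ∀ x, R ≤ x → ∫ y in Ioi x, cevScaleDensity K β c y ≤
      2 / (K * β) * x ^ (1 - β) * cevScaleDensity K β c x := by
  set D := cevScaleDensity K β c
  set A := 2 / (K * β)
  have hAKβ : A * (K * β) = 2 := div_mul_cancel₀ _ (by positivity)
  -- `Φ = A y^(1-β) D` has `Φ' = -2D + O(y^(-β)) D`, so `D ≤ -Φ'` for large `y`.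
  have hΦ : ∀ y > 0, HasDerivAt (fun y => A * y ^ (1 - β) * D y)
      (A * (1 - β) * y ^ (-β) * D y - 2 * D y) y := by
    intro y hy
    refine (((Real.hasDerivAt_rpow_const (p := 1 - β) (Or.inl hy.ne')).const_mul A).mul
      (hasDerivAt_cevScaleDensity K β c hy)).congr_deriv ?_
    have hpow : y ^ (1 - β) * y ^ (β - 1) = 1 := by
      rw [← Real.rpow_add hy]; simp
    rw [sub_sub_cancel_left, ← hAKβ]
    linear_combination (-(A * (K * β)) * D y) * hpow
  have hΦ_lim : Tendsto (fun y => A * y ^ (1 - β) * D y) atTop (𝓝 0) := by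
    have h := (tendsto_rpow_mul_exp_neg_mul_rpow_atTop_nhds_zero (1 - β) hK hβ).const_mul
      (A * Real.exp (K * c ^ β))
    rw [mul_zero] at h
    refine h.congr fun y => ?_
    simp only [D, cevScaleDensity]
    rw [mul_sub, Real.exp_sub, neg_mul, Real.exp_neg]
    ring
  obtain ⟨R, hR⟩ := ((tendsto_rpow_neg_atTop hβ).const_mul (A * (1 - β))).eventually
    (eventually_le_nhds (show A * (1 - β) * 0 < 1 by simp))
    |>.exists_forall_of_atTop
  refine ⟨max R 1, by positivity, fun x hx => ?_⟩
  have hx0 : 0 < x := one_pos.trans_le ((le_max_right _ _).trans hx)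
  refine (integrableOn_Ioi_and_integral_le_of_le_neg_deriv
    (fun y hy => hΦ y (hx0.trans_le hy)) hΦ_lim
    (continuous_cevScaleDensity K hβ.le c).continuousOn
    (fun y _ => (cevScaleDensity_pos K β c y).le) fun y hy => ?_).2
  have hsmall := hR y ((le_max_left _ _).trans (hx.trans hy.le))
  nlinarith [cevScaleDensity_pos K β c y]

lemma tendsto_atTop_of_eq_cevScaleDensity {K β c : ℝ} (hK : K ≤ 0) (hβ : 0 ≤ β) (hc : 0 ≤ c)
    {s : ℝ → ℝ} (hs : ∀ x ∈ Ioi 0, s x = ∫ y in c..x, cevScaleDensity K β c y) :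
    Tendsto s atTop atTop := by
  refine (tendsto_intervalIntegral_atTop_of_one_le (continuous_cevScaleDensity K hβ c)
    fun y hy => one_le_cevScaleDensity hK hβ hc hy).congr' ?_
  filter_upwards [eventually_gt_atTop 0] with x hx using (hs x hx).symm

-- The endpoint `∞` is good, for `b = σ / x`, so that `b² / σ² = 1 / x²`.
def IsGoodAtTop (ρ s : ℝ → ℝ) : Prop :=
  ∃ L : ℝ, Tendsto s atTop (𝓝 L) ∧
    ∃ z ∈ Ioi (0 : ℝ), IntegrableOn (fun x => (L - s x) / (ρ x * x ^ 2)) (Ioi z)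

lemma exists_integrableOn_tail_div_cevScaleDensity {K β c : ℝ} (hK : 0 < K) (hβ : 0 < β)
    (hc : 0 ≤ c) :
    ∃ z ∈ Ioi (0 : ℝ), IntegrableOn (fun x => ((∫ y in Ioi c, cevScaleDensity K β c y) -
      ∫ y in c..x, cevScaleDensity K β c y) / (cevScaleDensity K β c x * x ^ 2)) (Ioi z) := by
  set D := cevScaleDensity K β c
  obtain ⟨R, hR, htail⟩ := exists_integral_Ioi_cevScaleDensity_le hK hβ c
  have hD : Continuous D := continuous_cevScaleDensity K hβ.le c
  have htail_eq : ∀ x > 0, (∫ y in Ioi c, D y) - ∫ y in c..x, D y = ∫ y in Ioi x, D y :=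
    fun x hx => by
      rw [← intervalIntegral.integral_Ioi_sub_Ioi' (integrableOn_cevScaleDensity hK hβ c hc)
        (integrableOn_cevScaleDensity hK hβ c hx.le), sub_sub_cancel]
  have hden : ∀ x > 0, 0 < D x * x ^ 2 := fun x hx =>
    mul_pos (cevScaleDensity_pos K β c x) (pow_pos hx 2)
  refine ⟨R, hR, Integrable.mono'
    ((integrableOn_Ioi_rpow_of_lt (by linarith : -1 - β < -1) hR).const_mul (2 / (K * β)))
    (ContinuousOn.aestronglyMeasurable ?_ measurableSet_Ioi)
    ((ae_restrict_iff' measurableSet_Ioi).2 (ae_of_all _ fun x hx => ?_))⟩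
  · exact (continuous_const.sub (intervalIntegral.continuous_primitive
      (fun a b => hD.intervalIntegrable a b) c)).continuousOn.div
      (hD.mul (continuous_pow 2)).continuousOn fun x hx => (hden x (hR.trans hx)).ne'
  · have hx0 : 0 < x := hR.trans hx
    rw [htail_eq x hx0, Real.norm_of_nonneg (div_nonneg (setIntegral_nonneg measurableSet_Ioi
      fun y _ => (cevScaleDensity_pos K β c y).le) (hden x hx0).le)]
    calc (∫ y in Ioi x, D y) / (D x * x ^ 2)
        ≤ 2 / (K * β) * x ^ (1 - β) * D x / (D x * x ^ 2) :=
          div_le_div_of_nonneg_right (htail x hx.le) (hden x hx0).le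
      _ = 2 / (K * β) * x ^ (-1 - β) := by
        rw [show -1 - β = 1 - β - 2 by ring, Real.rpow_sub hx0 (1 - β) 2, Real.rpow_two]
        have hDx : D x ≠ 0 := (cevScaleDensity_pos K β c x).ne'
        field_simp

lemma isGoodAtTop_of_eq_cevScaleDensity {K β c : ℝ} (hK : 0 < K) (hβ : 0 < β) (hc : 0 ≤ c)
    {ρ s : ℝ → ℝ} (hρ : ∀ x ∈ Ioi 0, ρ x = cevScaleDensity K β c x)
    (hs : ∀ x ∈ Ioi 0, s x = ∫ y in c..x, cevScaleDensity K β c y) : IsGoodAtTop ρ s := by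
  obtain ⟨z, hz, hint⟩ := exists_integrableOn_tail_div_cevScaleDensity hK hβ hc
  refine ⟨_, (intervalIntegral_tendsto_integral_Ioi c
    (integrableOn_cevScaleDensity hK hβ c hc) tendsto_id).congr' ?_, z, hz,
    hint.congr_fun (fun x hx => ?_) measurableSet_Ioi⟩
  · filter_upwards [eventually_gt_atTop 0] with x hx using (hs x hx).symm
  · have hx0 : x ∈ Ioi 0 := mem_Ioi.2 (lt_trans hz hx)
    rw [hs x hx0, hρ x hx0]

/-- **CEV model with drift, case `α < 1`.**  On `J = (0, ∞)`, with `μ(x) = μ₀ x`,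
`σ(x) = σ₀ x^α`, `b(x) = σ₀ x^(α-1) = σ(x)/x`, `ρ(x) = exp(-∫_c^x 2μ/σ²)`,
`s(x) = ∫_c^x ρ`, `ρ̃(x) = ρ(x)·exp(-∫_c^x 2b/σ)` and `s̃(x) = ∫_c^x ρ̃`:
(i) `s̃(0) = lim_{x ↓ 0} s̃(x) = -∞` (i.e. `s̃ → -∞` as `x ↓ 0`); and
(ii) the endpoint `∞` is good iff `μ₀ > 0`; that is, the two conditions
`s(∞) = lim_{x ↑ ∞} s(x) < ∞` (i.e. `s` converges to a finite limit `L` at `+∞`) and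
`(s(∞) - s(x))·b²(x)/(ρ(x)σ²(x)) = (s(∞) - s(x))/(ρ(x) x²)` integrable on `(z, ∞)` for some
`z ∈ (0, ∞)` hold simultaneously iff `μ₀ > 0`. -/
theorem cev_model_alpha_lt_one
    (c : ℝ) (hc : 0 < c) (α : ℝ) (hα : α < 1) (μ0 : ℝ) (σ0 : ℝ) (hσ0 : 0 < σ0)
    (ρ s ρt st : ℝ → ℝ)
    (hρ : ∀ x ∈ Ioi (0 : ℝ),
      ρ x = Real.exp (-(∫ y in c..x, 2 * (μ0 * y) / (σ0 * y ^ α) ^ 2)))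
    (hs : ∀ x ∈ Ioi (0 : ℝ), s x = ∫ y in c..x, ρ y)
    (hρt : ∀ x ∈ Ioi (0 : ℝ),
      ρt x = ρ x * Real.exp (-(∫ y in c..x, 2 * (σ0 * y ^ (α - 1)) / (σ0 * y ^ α))))
    (hst : ∀ x ∈ Ioi (0 : ℝ), st x = ∫ y in c..x, ρt y) :
    Tendsto st (nhdsWithin 0 (Ioi 0)) atBot ∧
    ((∃ L : ℝ, Tendsto s atTop (nhds L) ∧
        ∃ z ∈ Ioi (0 : ℝ), IntegrableOn
          (fun x => (L - s x) / (ρ x * x ^ 2)) (Ioi z) volume) ↔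
      0 < μ0) := by
  have hβ : 0 < 2 - 2 * α := by linarith
  set K := 2 * μ0 / σ0 ^ 2 / (2 - 2 * α)
  set D := cevScaleDensity K (2 - 2 * α) c
  have hρD : ∀ x ∈ Ioi 0, ρ x = D x := fun x hx => by
    rw [hρ x hx, exp_neg_integral_drift hc hx hα.ne μ0 σ0]
  have hsD : ∀ x ∈ Ioi 0, s x = ∫ y in c..x, D y := fun x hx => by
    rw [hs x hx]
    exact intervalIntegral.integral_congr fun y hy => hρD y (pos_of_mem_uIcc hc hx hy)
  have hstD : ∀ x ∈ Ioi 0, st x = ∫ y in c..x, c ^ 2 * D y / y ^ 2 := fun x hx => by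
    rw [hst x hx]
    refine intervalIntegral.integral_congr fun y hy => ?_
    have hy0 := pos_of_mem_uIcc hc hx hy
    rw [hρt y hy0, hρD y hy0, exp_neg_integral_two_mul_div_self hc hy0 α hσ0.ne']
    ring
  refine ⟨?_, ⟨fun ⟨L, hL, _⟩ => ?_, fun hμ => ?_⟩⟩
  · refine (tendsto_intervalIntegral_div_sq_nhdsGT_zero hc
      (continuous_const.mul (continuous_cevScaleDensity K hβ.le c)).continuousOn
      fun y _ => mul_pos (pow_pos hc 2) (cevScaleDensity_pos _ _ _ _)).congr' ?_
    exact eventually_nhdsWithin_of_forall fun x hx => (hstD x hx).symm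
  · by_contra! hμ
    have hK : K ≤ 0 := div_nonpos_of_nonpos_of_nonneg
      (div_nonpos_of_nonpos_of_nonneg (by linarith) (sq_nonneg _)) hβ.le
    exact not_tendsto_nhds_of_tendsto_atTop
      (tendsto_atTop_of_eq_cevScaleDensity hK hβ.le hc.le hsD) L hL
  · exact isGoodAtTop_of_eq_cevScaleDensity (by positivity) hβ hc.le hρD hsD
end

section
/- In the CEV model setting, for any μ0 ∈ ℝ one has ṽ(∞) := lim_{x↑∞} ṽ(x) < ∞ if and only if α > 1. (In the diffusion interpretation: the auxiliary diffusion dỸ_t = (μ0 Ỹ_t + σ0² Ỹ_t^{2α−1}) dt + σ0 Ỹ_t^α dW̃_t exits (0,∞) at ∞ if and only if α > 1.) -/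
open MeasureTheory Set Filter Topology

/-!
With `k = 2μ₀/σ₀²` and `w(x) = exp (-k ∫_c^x y^(1-2α) dy)` the coefficients give
`ρ̃(x) = w(x) (c/x)²` and `ρ̃(y) σ(y)² = σ₀² c² w(y) y^(2α-2)`; since `s̃` is increasing, `ṽ` is
nondecreasing on `[c, ∞)`.

If `α > 1` then `∫_c^∞ y^(1-2α) dy = c^(2-2α)/(2α-2) =: B`, so `w(t) ≤ e^{|k|B} w(y)` for
`c ≤ y ≤ t`. Hence `s̃(x) - s̃(y) ≤ e^{|k|B} w(y) c²/y`, the integrand of `ṽ` is `O(y^(1-2α))`,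
which is integrable at `∞`, and the monotone function `ṽ` is bounded.

If `α ≤ 1`, the exponent of `w` moves by at most `1` over a step `h(y) ≍ y^(2α-1) ≤ y`, so
`s̃(x) - s̃(y) ≥ h(y) ρ̃(y)/(4e)` whenever `x ≥ 2y`. The integrand of `ṽ(x)` is then at least `C/y`
on `[max c 1, x/2]`, and `ṽ(x) ≥ C log (x / (2 max c 1)) → ∞`.
-/

lemma exists_tendsto_atTop_of_monotoneOn_Ici {f : ℝ → ℝ} {c M : ℝ}
    (hf : MonotoneOn f (Ici c)) (hM : ∀ x ∈ Ici c, f x ≤ M) :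
    ∃ L, Tendsto f atTop (𝓝 L) := by
  have hmono : Monotone fun x => f (max x c) := fun a b hab =>
    hf (le_max_right a c) (le_max_right b c) (max_le_max hab le_rfl)
  refine ⟨_, (tendsto_atTop_ciSup hmono ⟨M, ?_⟩).congr' ?_⟩
  · rintro _ ⟨x, rfl⟩
    exact hM _ (le_max_right x c)
  · filter_upwards [eventually_ge_atTop c] with x hx
    rw [max_eq_left hx]

lemma ContinuousOn.intervalIntegrable_of_Ioi {f : ℝ → ℝ} (hf : ContinuousOn f (Ioi 0)) {a b : ℝ}
    (ha : 0 < a) (hb : 0 < b) : IntervalIntegrable f volume a b :=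
  (hf.mono (ordConnected_Ioi.uIcc_subset ha hb)).intervalIntegrable

lemma continuousOn_integral_Ioi {f : ℝ → ℝ} {c : ℝ} (hf : ContinuousOn f (Ioi 0)) (hc : 0 < c) :
    ContinuousOn (fun x => ∫ y in c..x, f y) (Ioi 0) := fun x hx =>
  (intervalIntegral.integral_hasDerivAt_right (hf.intervalIntegrable_of_Ioi hc hx)
    (hf.stronglyMeasurableAtFilter isOpen_Ioi x hx)
    (hf.continuousAt (Ioi_mem_nhds hx))).continuousAt.continuousWithinAt

lemma continuousOn_rpow_const_Ioi (p : ℝ) : ContinuousOn (fun y : ℝ => y ^ p) (Ioi 0) :=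
  fun y hy => (Real.continuousAt_rpow_const y p (Or.inl (ne_of_gt hy))).continuousWithinAt

lemma rpow_pow_two {y : ℝ} (hy : 0 ≤ y) (p : ℝ) : (y ^ p) ^ 2 = y ^ (2 * p) := by
  rw [← Real.rpow_natCast, ← Real.rpow_mul hy]
  norm_num [mul_comm]

lemma rpow_le_two_rpow_abs_mul_rpow {y t : ℝ} (p : ℝ) (hy : 0 < y) (hyt : y ≤ t)
    (ht : t ≤ 2 * y) : t ^ p ≤ 2 ^ |p| * y ^ p := by
  have h1 : 1 ≤ t / y := (one_le_div hy).2 hyt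
  have h2 : t / y ≤ 2 := (div_le_iff₀ hy).2 (by linarith)
  calc t ^ p = (t / y) ^ p * y ^ p := by
        rw [Real.div_rpow (hy.le.trans hyt) hy.le, div_mul_cancel₀ _ (by positivity)]
    _ ≤ 2 ^ |p| * y ^ p := by
        gcongr
        calc (t / y) ^ p ≤ (t / y) ^ |p| := Real.rpow_le_rpow_of_exponent_le h1 (le_abs_self p)
          _ ≤ 2 ^ |p| := by gcongr

lemma integral_rpow_le_of_lt_neg_one {r a b : ℝ} (hr : r < -1) (ha : 0 < a) (hab : a ≤ b) :
    ∫ y in a..b, y ^ r ≤ a ^ (r + 1) / -(r + 1) := by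
  have hb : 0 < b := ha.trans_le hab
  rw [integral_rpow (Or.inr ⟨hr.ne, notMem_uIcc_of_lt ha hb⟩), ← neg_div_neg_eq, neg_sub]
  have : 0 < b ^ (r + 1) := Real.rpow_pos_of_pos hb _
  exact div_le_div_of_nonneg_right (by linarith) (by linarith)

lemma integral_rpow_one_sub_two_mul_le {α c y t : ℝ} (hα : 1 < α) (hc : 0 < c) (hcy : c ≤ y)
    (hyt : y ≤ t) : ∫ u in y..t, u ^ (1 - 2 * α) ≤ c ^ (2 - 2 * α) / (2 * α - 2) := by
  have h := (integral_rpow_le_of_lt_neg_one (r := 1 - 2 * α) (by linarith) (hc.trans_le hcy)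
    hyt).trans <|
    div_le_div_of_nonneg_right (Real.rpow_le_rpow_of_nonpos hc hcy (by linarith)) (by linarith)
  rwa [show 1 - 2 * α + 1 = 2 - 2 * α by ring, neg_sub] at h

lemma integral_rpow_le_of_le_two_mul (p : ℝ) {y t : ℝ} (hy : 0 < y) (hyt : y ≤ t)
    (ht : t ≤ 2 * y) : ∫ u in y..t, u ^ p ≤ 2 ^ |p| * y ^ p * (t - y) := by
  refine (intervalIntegral.integral_mono_on hyt
    ((continuousOn_rpow_const_Ioi p).intervalIntegrable_of_Ioi hy (hy.trans_le hyt))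
    intervalIntegrable_const fun u hu =>
      rpow_le_two_rpow_abs_mul_rpow p hy hu.1 (hu.2.trans ht)).trans_eq ?_
  rw [intervalIntegral.integral_const, smul_eq_mul, mul_comm]

/-- With `s = s̃` and `D = ρ̃ σ²` this is `ṽ`. -/
noncomputable def fellerIntegral (s D : ℝ → ℝ) (c x : ℝ) : ℝ :=
  ∫ y in c..x, (s x - s y) / D y

section Feller

variable {s D : ℝ → ℝ} {c : ℝ}

lemma intervalIntegrable_fellerIntegrand (hs : ContinuousOn s (Ioi 0))
    (hD : ContinuousOn D (Ioi 0)) (hD0 : ∀ y ∈ Ioi (0 : ℝ), D y ≠ 0) (x : ℝ) {a b : ℝ}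
    (ha : 0 < a) (hb : 0 < b) :
    IntervalIntegrable (fun y => (s x - s y) / D y) volume a b :=
  ((continuousOn_const.sub hs).div hD hD0).intervalIntegrable_of_Ioi ha hb

lemma fellerIntegral_monotoneOn (hc : 0 < c) (hs : ContinuousOn s (Ioi 0))
    (hsm : MonotoneOn s (Ioi 0)) (hD : ContinuousOn D (Ioi 0)) (hD0 : ∀ y ∈ Ioi (0 : ℝ), 0 < D y) :
    MonotoneOn (fellerIntegral s D c) (Ici c) := by
  intro u hu x hx hux
  have hu0 : 0 < u := hc.trans_le hu
  have hx0 : 0 < x := hu0.trans_le hux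
  have hint := intervalIntegrable_fellerIntegrand hs hD (fun y hy => (hD0 y hy).ne')
  have hle : fellerIntegral s D c u ≤ ∫ y in c..u, (s x - s y) / D y :=
    intervalIntegral.integral_mono_on hu (hint u hc hu0) (hint x hc hu0) fun y hy => by
      have hy0 : 0 < y := hc.trans_le hy.1
      gcongr
      · exact (hD0 y hy0).le
      · exact hsm hu0 hx0 hux
  have hnonneg : 0 ≤ ∫ y in u..x, (s x - s y) / D y :=
    intervalIntegral.integral_nonneg hux fun y hy =>
      div_nonneg (sub_nonneg.2 (hsm (hu0.trans_le hy.1) hx0 hy.2)) (hD0 y (hu0.trans_le hy.1)).le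
  have hsplit := intervalIntegral.integral_add_adjacent_intervals (hint x hc hu0) (hint x hu0 hx0)
  change _ ≤ ∫ y in c..x, (s x - s y) / D y
  linarith

lemma integral_le_fellerIntegral (hc : 0 < c) (hs : ContinuousOn s (Ioi 0))
    (hsm : MonotoneOn s (Ioi 0)) (hD : ContinuousOn D (Ioi 0)) (hD0 : ∀ y ∈ Ioi (0 : ℝ), 0 < D y)
    {a b x : ℝ} (hca : c ≤ a) (hab : a ≤ b) (hbx : b ≤ x) :
    ∫ y in a..b, (s x - s y) / D y ≤ fellerIntegral s D c x := by
  have hx0 : 0 < x := hc.trans_le (hca.trans (hab.trans hbx))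
  refine intervalIntegral.integral_mono_interval hca hab hbx ?_
    (intervalIntegrable_fellerIntegrand hs hD (fun y hy => (hD0 y hy).ne') x hc hx0)
  filter_upwards [ae_restrict_mem measurableSet_Ioc] with y hy
  have hy0 : 0 < y := hc.trans hy.1
  exact div_nonneg (sub_nonneg.2 (hsm hy0 hx0 hy.2)) (hD0 y hy0).le

end Feller

noncomputable def cevWeight (k α c x : ℝ) : ℝ :=
  Real.exp (-(k * ∫ y in c..x, y ^ (1 - 2 * α)))

noncomputable def cevDensity (k α c x : ℝ) : ℝ :=
  cevWeight k α c x * (c / x) ^ 2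

noncomputable def cevScale (k α c x : ℝ) : ℝ :=
  ∫ y in c..x, cevDensity k α c y

noncomputable def cevAuxV (k α c σ0 : ℝ) : ℝ → ℝ :=
  fellerIntegral (cevScale k α c) (fun y => cevDensity k α c y * (σ0 * y ^ α) ^ 2) c

section CEV

variable {k α c σ0 : ℝ}

lemma exp_integral_mul_exp_integral_eq_cevDensity {μ0 x : ℝ} (hc : 0 < c) (hσ0 : σ0 ≠ 0)
    (hx : 0 < x) :
    Real.exp (-(∫ y in c..x, 2 * (μ0 * y) / (σ0 * y ^ α) ^ 2)) *
        Real.exp (-(∫ y in c..x, 2 * (σ0 * y ^ (α - 1)) / (σ0 * y ^ α))) =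
      cevDensity (2 * μ0 / σ0 ^ 2) α c x := by
  have hsub : uIcc c x ⊆ Ioi 0 := ordConnected_Ioi.uIcc_subset hc hx
  have hdrift : ∫ y in c..x, 2 * (μ0 * y) / (σ0 * y ^ α) ^ 2 =
      2 * μ0 / σ0 ^ 2 * ∫ y in c..x, y ^ (1 - 2 * α) := by
    rw [← intervalIntegral.integral_const_mul]
    refine intervalIntegral.integral_congr fun y hy => ?_
    have hy0 : 0 < y := hsub hy
    rw [mul_pow, rpow_pow_two hy0.le, Real.rpow_sub hy0, Real.rpow_one]
    field_simp
  have hlog : ∫ y in c..x, 2 * (σ0 * y ^ (α - 1)) / (σ0 * y ^ α) = 2 * Real.log (x / c) := by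
    rw [← integral_inv (notMem_uIcc_of_lt hc hx), ← intervalIntegral.integral_const_mul]
    refine intervalIntegral.integral_congr fun y hy => ?_
    have hy0 : 0 < y := hsub hy
    rw [Real.rpow_sub_one hy0.ne']
    field_simp
  have hsq : Real.exp (-(2 * Real.log (x / c))) = (c / x) ^ 2 := by
    rw [← Real.exp_log (pow_pos (div_pos hc hx) 2), Real.log_pow, ← inv_div, Real.log_inv]
    push_cast
    ring_nf
  rw [hdrift, hlog, hsq, cevDensity, cevWeight]

lemma cevWeight_pos (k α c x : ℝ) : 0 < cevWeight k α c x := Real.exp_pos _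

lemma cevDensity_pos (hc : 0 < c) {x : ℝ} (hx : 0 < x) : 0 < cevDensity k α c x :=
  mul_pos (cevWeight_pos k α c x) (pow_pos (div_pos hc hx) 2)

lemma continuousOn_cevDensity (hc : 0 < c) : ContinuousOn (cevDensity k α c) (Ioi 0) :=
  (Real.continuous_exp.comp_continuousOn
    (continuousOn_const.mul (continuousOn_integral_Ioi (continuousOn_rpow_const_Ioi _) hc)).neg).mul
    ((continuousOn_const.div continuousOn_id fun _ hx => ne_of_gt hx).pow 2)

lemma continuousOn_cevScale (hc : 0 < c) : ContinuousOn (cevScale k α c) (Ioi 0) :=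
  continuousOn_integral_Ioi (continuousOn_cevDensity hc) hc

lemma cevScale_sub_cevScale (hc : 0 < c) {x y : ℝ} (hy : 0 < y) (hx : 0 < x) :
    cevScale k α c x - cevScale k α c y = ∫ t in y..x, cevDensity k α c t := by
  rw [cevScale, cevScale, sub_eq_iff_eq_add', intervalIntegral.integral_add_adjacent_intervals
    ((continuousOn_cevDensity hc).intervalIntegrable_of_Ioi hc hy)
    ((continuousOn_cevDensity hc).intervalIntegrable_of_Ioi hy hx)]

lemma monotoneOn_cevScale (hc : 0 < c) : MonotoneOn (cevScale k α c) (Ioi 0) := by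
  intro y hy x hx hyx
  rw [← sub_nonneg, cevScale_sub_cevScale hc hy hx]
  exact intervalIntegral.integral_nonneg hyx fun t ht => (cevDensity_pos hc (hy.trans_le ht.1)).le

lemma cevWeight_eq_mul_exp (hc : 0 < c) {y t : ℝ} (hy : 0 < y) (ht : 0 < t) :
    cevWeight k α c t = cevWeight k α c y * Real.exp (-(k * ∫ u in y..t, u ^ (1 - 2 * α))) := by
  rw [cevWeight, cevWeight, ← Real.exp_add, ← intervalIntegral.integral_add_adjacent_intervals
    ((continuousOn_rpow_const_Ioi _).intervalIntegrable_of_Ioi hc hy)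
    ((continuousOn_rpow_const_Ioi _).intervalIntegrable_of_Ioi hy ht)]
  ring_nf

lemma cevWeight_le_mul_exp (hc : 0 < c) {y t : ℝ} (hy : 0 < y) (hyt : y ≤ t) :
    cevWeight k α c t ≤ cevWeight k α c y * Real.exp (|k| * ∫ u in y..t, u ^ (1 - 2 * α)) := by
  have hI : 0 ≤ ∫ u in y..t, u ^ (1 - 2 * α) := intervalIntegral.integral_nonneg hyt
    fun u hu => Real.rpow_nonneg (hy.le.trans hu.1) _
  rw [cevWeight_eq_mul_exp hc hy (hy.trans_le hyt)]
  exact mul_le_mul_of_nonneg_left (Real.exp_le_exp.2 (by nlinarith [neg_abs_le k]))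
    (cevWeight_pos k α c y).le

lemma mul_exp_le_cevWeight (hc : 0 < c) {y t : ℝ} (hy : 0 < y) (hyt : y ≤ t) :
    cevWeight k α c y * Real.exp (-(|k| * ∫ u in y..t, u ^ (1 - 2 * α))) ≤ cevWeight k α c t := by
  have hI : 0 ≤ ∫ u in y..t, u ^ (1 - 2 * α) := intervalIntegral.integral_nonneg hyt
    fun u hu => Real.rpow_nonneg (hy.le.trans hu.1) _
  rw [cevWeight_eq_mul_exp hc hy (hy.trans_le hyt)]
  exact mul_le_mul_of_nonneg_left (Real.exp_le_exp.2 (by nlinarith [le_abs_self k]))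
    (cevWeight_pos k α c y).le

lemma cevDensity_mul_sq (σ0 : ℝ) {y : ℝ} (hy : 0 < y) :
    cevDensity k α c y * (σ0 * y ^ α) ^ 2 =
      σ0 ^ 2 * c ^ 2 * cevWeight k α c y * y ^ (2 * α - 2) := by
  rw [cevDensity, Real.rpow_sub hy, Real.rpow_two, mul_pow, rpow_pow_two hy.le]
  field_simp

lemma cevDensity_mul_sq_pos (hc : 0 < c) (hσ0 : σ0 ≠ 0) :
    ∀ y ∈ Ioi (0 : ℝ), 0 < cevDensity k α c y * (σ0 * y ^ α) ^ 2 := fun _ hy =>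
  mul_pos (cevDensity_pos hc hy)
    (sq_pos_of_ne_zero (mul_ne_zero hσ0 (Real.rpow_pos_of_pos hy α).ne'))

lemma continuousOn_cevDensity_mul_sq (hc : 0 < c) :
    ContinuousOn (fun y => cevDensity k α c y * (σ0 * y ^ α) ^ 2) (Ioi 0) :=
  (continuousOn_cevDensity hc).mul ((continuousOn_const.mul (continuousOn_rpow_const_Ioi α)).pow 2)

lemma intervalIntegrable_cevFellerIntegrand (hc : 0 < c) (hσ0 : σ0 ≠ 0) (x : ℝ) {a b : ℝ}
    (ha : 0 < a) (hb : 0 < b) :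
    IntervalIntegrable
      (fun y => (cevScale k α c x - cevScale k α c y) / (cevDensity k α c y * (σ0 * y ^ α) ^ 2))
      volume a b :=
  intervalIntegrable_fellerIntegrand (continuousOn_cevScale hc) (continuousOn_cevDensity_mul_sq hc)
    (fun y hy => (cevDensity_mul_sq_pos hc hσ0 y hy).ne') x ha hb

lemma monotoneOn_cevAuxV (hc : 0 < c) (hσ0 : σ0 ≠ 0) : MonotoneOn (cevAuxV k α c σ0) (Ici c) :=
  fellerIntegral_monotoneOn hc (continuousOn_cevScale hc) (monotoneOn_cevScale hc)
    (continuousOn_cevDensity_mul_sq hc) (cevDensity_mul_sq_pos hc hσ0)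

lemma integral_le_cevAuxV (hc : 0 < c) (hσ0 : σ0 ≠ 0) {a b x : ℝ} (hca : c ≤ a) (hab : a ≤ b)
    (hbx : b ≤ x) :
    ∫ y in a..b, (cevScale k α c x - cevScale k α c y) / (cevDensity k α c y * (σ0 * y ^ α) ^ 2)
      ≤ cevAuxV k α c σ0 x :=
  integral_le_fellerIntegral hc (continuousOn_cevScale hc) (monotoneOn_cevScale hc)
    (continuousOn_cevDensity_mul_sq hc) (cevDensity_mul_sq_pos hc hσ0) hca hab hbx

lemma cevWeight_le_mul_exp_of_one_lt (hc : 0 < c) (hα : 1 < α) {y t : ℝ} (hcy : c ≤ y)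
    (hyt : y ≤ t) :
    cevWeight k α c t ≤
      cevWeight k α c y * Real.exp (|k| * (c ^ (2 - 2 * α) / (2 * α - 2))) := by
  have hy0 : 0 < y := hc.trans_le hcy
  have hI := integral_rpow_one_sub_two_mul_le hα hc hcy hyt
  refine (cevWeight_le_mul_exp hc hy0 hyt).trans ?_
  gcongr
  exact cevWeight_pos k α c y |>.le

lemma cevFellerIntegrand_le (hc : 0 < c) (hσ0 : σ0 ≠ 0) (hα : 1 < α) {x y : ℝ} (hcy : c ≤ y)
    (hyx : y ≤ x) :
    (cevScale k α c x - cevScale k α c y) / (cevDensity k α c y * (σ0 * y ^ α) ^ 2) ≤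
      Real.exp (|k| * (c ^ (2 - 2 * α) / (2 * α - 2))) / σ0 ^ 2 * y ^ (1 - 2 * α) := by
  set E := Real.exp (|k| * (c ^ (2 - 2 * α) / (2 * α - 2)))
  have hy0 : 0 < y := hc.trans_le hcy
  have hw := cevWeight_pos k α c y
  have hscale : cevScale k α c x - cevScale k α c y ≤ cevWeight k α c y * E * c ^ 2 * y⁻¹ := by
    rw [cevScale_sub_cevScale hc hy0 (hy0.trans_le hyx)]
    calc ∫ t in y..x, cevDensity k α c t
        ≤ ∫ t in y..x, cevWeight k α c y * E * c ^ 2 * t ^ (-2 : ℝ) := by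
          refine intervalIntegral.integral_mono_on hyx
            ((continuousOn_cevDensity hc).intervalIntegrable_of_Ioi hy0 (hy0.trans_le hyx))
            (((continuousOn_rpow_const_Ioi _).intervalIntegrable_of_Ioi hy0
              (hy0.trans_le hyx)).const_mul _) fun t ht => ?_
          have ht0 : 0 < t := hy0.trans_le ht.1
          rw [cevDensity, Real.rpow_neg ht0.le, Real.rpow_two, div_pow, ← mul_div_assoc,
            ← div_eq_mul_inv]
          gcongr
          exact cevWeight_le_mul_exp_of_one_lt hc hα hcy ht.1
      _ ≤ cevWeight k α c y * E * c ^ 2 * y⁻¹ := by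
          rw [intervalIntegral.integral_const_mul]
          gcongr
          refine (integral_rpow_le_of_lt_neg_one (r := -2) (by norm_num) hy0 hyx).trans_eq ?_
          norm_num [Real.rpow_neg_one]
  rw [div_le_iff₀ (cevDensity_mul_sq_pos hc hσ0 y hy0), cevDensity_mul_sq σ0 hy0]
  calc cevScale k α c x - cevScale k α c y ≤ cevWeight k α c y * E * c ^ 2 * y⁻¹ := hscale
    _ = E / σ0 ^ 2 * y ^ (1 - 2 * α) * (σ0 ^ 2 * c ^ 2 * cevWeight k α c y * y ^ (2 * α - 2)) := by
        rw [← Real.rpow_neg_one, show (-1 : ℝ) = 1 - 2 * α + (2 * α - 2) by ring,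
          Real.rpow_add hy0]
        field_simp

lemma cevAuxV_le (hc : 0 < c) (hσ0 : σ0 ≠ 0) (hα : 1 < α) {x : ℝ} (hcx : c ≤ x) :
    cevAuxV k α c σ0 x ≤ Real.exp (|k| * (c ^ (2 - 2 * α) / (2 * α - 2))) / σ0 ^ 2 *
      (c ^ (2 - 2 * α) / (2 * α - 2)) := by
  have hx0 : 0 < x := hc.trans_le hcx
  calc cevAuxV k α c σ0 x
      ≤ ∫ y in c..x, Real.exp (|k| * (c ^ (2 - 2 * α) / (2 * α - 2))) / σ0 ^ 2 *
          y ^ (1 - 2 * α) :=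
        intervalIntegral.integral_mono_on hcx
          (intervalIntegrable_cevFellerIntegrand hc hσ0 x hc hx0)
          (((continuousOn_rpow_const_Ioi _).intervalIntegrable_of_Ioi hc hx0).const_mul _)
          fun y hy => cevFellerIntegrand_le hc hσ0 hα hy.1 hy.2
    _ ≤ _ := by
        rw [intervalIntegral.integral_const_mul]
        gcongr
        exact integral_rpow_one_sub_two_mul_le hα hc le_rfl hcx

lemma cevWeight_mul_exp_neg_one_le (hc : 0 < c) {y t : ℝ} (hy : 0 < y) (hyt : y ≤ t)
    (ht : t ≤ 2 * y) (hsmall : |k| * (2 ^ |1 - 2 * α| * y ^ (1 - 2 * α) * (t - y)) ≤ 1) :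
    cevWeight k α c y * Real.exp (-1) ≤ cevWeight k α c t := by
  refine le_trans ?_ (mul_exp_le_cevWeight hc hy hyt)
  have hI := mul_le_mul_of_nonneg_left (integral_rpow_le_of_le_two_mul (1 - 2 * α) hy hyt ht)
    (abs_nonneg k)
  exact mul_le_mul_of_nonneg_left (Real.exp_le_exp.2 (by linarith)) (cevWeight_pos k α c y).le

lemma mul_le_cevScale_sub (hc : 0 < c) {x y h m : ℝ} (hy : 0 < y) (hh : 0 ≤ h)
    (hyx : y + h ≤ x) (hm : ∀ t ∈ Icc y (y + h), m ≤ cevDensity k α c t) :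
    h * m ≤ cevScale k α c x - cevScale k α c y := by
  have hint : ∀ b : ℝ, 0 < b → IntervalIntegrable (cevDensity k α c) volume y b :=
    fun b hb => (continuousOn_cevDensity hc).intervalIntegrable_of_Ioi hy hb
  rw [cevScale_sub_cevScale hc hy (by linarith)]
  calc h * m = ∫ _ in y..y + h, m := by
        rw [intervalIntegral.integral_const, smul_eq_mul, add_sub_cancel_left]
    _ ≤ ∫ t in y..y + h, cevDensity k α c t :=
        intervalIntegral.integral_mono_on (by linarith) intervalIntegrable_const
          (hint _ (by linarith)) hm
    _ ≤ ∫ t in y..x, cevDensity k α c t := by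
        refine intervalIntegral.integral_mono_interval le_rfl (by linarith) hyx ?_
          (hint x (by linarith))
        filter_upwards [ae_restrict_mem measurableSet_Ioc] with t ht
        exact (cevDensity_pos hc (hy.trans ht.1)).le

lemma le_cevFellerIntegrand (hc : 0 < c) (hσ0 : σ0 ≠ 0) (hα : α ≤ 1) {x y : ℝ} (hy : 1 ≤ y)
    (hyx : 2 * y ≤ x) :
    1 / ((|k| + 1) * 2 ^ |1 - 2 * α|) * Real.exp (-1) / (4 * σ0 ^ 2) * y⁻¹ ≤
      (cevScale k α c x - cevScale k α c y) / (cevDensity k α c y * (σ0 * y ^ α) ^ 2) := by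
  set A : ℝ := 2 ^ |1 - 2 * α|
  set ε := 1 / ((|k| + 1) * A) with hε
  have hy0 : 0 < y := one_pos.trans_le hy
  have hA : 1 ≤ A := Real.one_le_rpow (by norm_num) (abs_nonneg _)
  have hε1 : ε ≤ 1 := (div_le_one (by positivity)).2 (by nlinarith [abs_nonneg k])
  have hyp : y ^ (2 * α - 2) ≤ 1 := Real.rpow_le_one_of_one_le_of_nonpos hy (by linarith)
  -- `h` is the step over which `k ∫ u ^ (1 - 2α)` moves by at most `1`
  set h := ε * y ^ (2 * α - 2) * y with hh
  have hh0 : 0 < h := by positivity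
  have hhy : h ≤ y :=
    mul_le_of_le_one_left hy0.le (mul_le_one₀ hε1 (Real.rpow_nonneg hy0.le _) hyp)
  have hsmall : |k| * (A * y ^ (1 - 2 * α) * h) ≤ 1 := by
    have hpow : y ^ (1 - 2 * α) * y ^ (2 * α - 2) * y = 1 := by
      rw [← Real.rpow_add hy0, show 1 - 2 * α + (2 * α - 2) = -1 by ring, Real.rpow_neg_one,
        inv_mul_cancel₀ hy0.ne']
    calc |k| * (A * y ^ (1 - 2 * α) * h)
        = |k| * A * ε * (y ^ (1 - 2 * α) * y ^ (2 * α - 2) * y) := by ring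
      _ = |k| / (|k| + 1) := by rw [hpow, hε]; field_simp
      _ ≤ 1 := (div_le_one (by positivity)).2 (by linarith)
  have hdensity : ∀ t ∈ Icc y (y + h),
      cevWeight k α c y * Real.exp (-1) * (c / (2 * y)) ^ 2 ≤ cevDensity k α c t := by
    intro t ht
    have ht0 : 0 < t := hy0.trans_le ht.1
    refine mul_le_mul (cevWeight_mul_exp_neg_one_le hc hy0 ht.1 (by linarith [ht.2]) ?_)
      (by gcongr; linarith [ht.2]) (by positivity) (cevWeight_pos k α c t).le
    exact le_trans (by gcongr; linarith [ht.2]) hsmall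
  have hscale := mul_le_cevScale_sub (x := x) hc hy0 hh0.le (by linarith) hdensity
  rw [le_div_iff₀ (cevDensity_mul_sq_pos hc hσ0 y hy0), cevDensity_mul_sq σ0 hy0]
  refine le_trans (le_of_eq ?_) hscale
  rw [hh]
  field_simp
  ring

lemma tendsto_cevAuxV_atTop (hc : 0 < c) (hσ0 : σ0 ≠ 0) (hα : α ≤ 1) :
    Tendsto (cevAuxV k α c σ0) atTop atTop := by
  set y₀ := max c 1
  set C := 1 / ((|k| + 1) * 2 ^ |1 - 2 * α|) * Real.exp (-1) / (4 * σ0 ^ 2)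
  have hy₀ : 0 < y₀ := hc.trans_le (le_max_left c 1)
  have hC : 0 < C := div_pos (by positivity) (mul_pos four_pos (sq_pos_of_ne_zero hσ0))
  refine tendsto_atTop_mono' _ ?_ ((Real.tendsto_log_atTop.comp
    ((tendsto_id.atTop_div_const two_pos).atTop_div_const hy₀)).const_mul_atTop hC)
  filter_upwards [eventually_ge_atTop (2 * y₀)] with x hx
  have hx0 : 0 < x / 2 := by linarith
  calc C * Real.log (x / 2 / y₀) = ∫ y in y₀..x / 2, C * y⁻¹ := by
        rw [intervalIntegral.integral_const_mul,
          integral_inv (notMem_uIcc_of_lt hy₀ hx0)]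
    _ ≤ ∫ y in y₀..x / 2,
          (cevScale k α c x - cevScale k α c y) / (cevDensity k α c y * (σ0 * y ^ α) ^ 2) :=
        intervalIntegral.integral_mono_on (by linarith)
          ((continuousOn_inv₀.mono fun _ hy => ne_of_gt hy).intervalIntegrable_of_Ioi hy₀ hx0
            |>.const_mul C)
          (intervalIntegrable_cevFellerIntegrand hc hσ0 x hy₀ hx0)
          fun y hy => le_cevFellerIntegrand hc hσ0 hα ((le_max_right c 1).trans hy.1)
            (by linarith [hy.2])
    _ ≤ cevAuxV k α c σ0 x :=
        integral_le_cevAuxV hc hσ0 (le_max_left c 1) (by linarith) (by linarith)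

end CEV

/-- **CEV model with drift: the auxiliary diffusion
`dỸ = (μ₀ Ỹ + σ₀² Ỹ^(2α-1)) dt + σ₀ Ỹ^α dW̃` exits `(0, ∞)` at `∞` iff `α > 1`.**
On `J = (0, ∞)`, with `μ(x) = μ₀ x`, `σ(x) = σ₀ x^α`, `b(x) = σ₀ x^(α-1) = σ(x)/x`,
`ρ(x) = exp(-∫_c^x 2μ/σ²)`, `ρ̃(x) = ρ(x)·exp(-∫_c^x 2b/σ)`, `s̃(x) = ∫_c^x ρ̃` and
`ṽ(x) = ∫_c^x (s̃(x) - s̃(y))/(ρ̃(y) σ(y)²) dy`, for any `μ₀ ∈ ℝ` one has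
`ṽ(∞) = lim_{x ↑ ∞} ṽ(x) < ∞` (equivalently, `ṽ` converges to a finite limit at `+∞`)
if and only if `α > 1`. -/
theorem cev_model_aux_exits_at_top_iff
    (c : ℝ) (hc : 0 < c) (α : ℝ) (μ0 : ℝ) (σ0 : ℝ) (hσ0 : 0 < σ0)
    (ρ ρt st vt : ℝ → ℝ)
    (hρ : ∀ x ∈ Ioi (0 : ℝ),
      ρ x = Real.exp (-(∫ y in c..x, 2 * (μ0 * y) / (σ0 * y ^ α) ^ 2)))
    (hρt : ∀ x ∈ Ioi (0 : ℝ),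
      ρt x = ρ x * Real.exp (-(∫ y in c..x, 2 * (σ0 * y ^ (α - 1)) / (σ0 * y ^ α))))
    (hst : ∀ x ∈ Ioi (0 : ℝ), st x = ∫ y in c..x, ρt y)
    (hvt : ∀ x ∈ Ioi (0 : ℝ),
      vt x = ∫ y in c..x, (st x - st y) / (ρt y * (σ0 * y ^ α) ^ 2)) :
    (∃ L : ℝ, Tendsto vt atTop (nhds L)) ↔ 1 < α := by
  set k := 2 * μ0 / σ0 ^ 2
  have hρt' : ∀ y ∈ Ioi (0 : ℝ), ρt y = cevDensity k α c y := fun y hy => by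
    rw [hρt y hy, hρ y hy, exp_integral_mul_exp_integral_eq_cevDensity hc hσ0.ne' hy]
  have hst' : ∀ y ∈ Ioi (0 : ℝ), st y = cevScale k α c y := fun y hy => by
    rw [hst y hy]
    exact intervalIntegral.integral_congr fun t ht =>
      hρt' t (ordConnected_Ioi.uIcc_subset hc hy ht)
  have hvt' : vt =ᶠ[atTop] cevAuxV k α c σ0 := by
    filter_upwards [eventually_gt_atTop 0] with x hx
    rw [hvt x hx]
    refine intervalIntegral.integral_congr fun y hy => ?_
    have hy0 : y ∈ Ioi (0 : ℝ) := ordConnected_Ioi.uIcc_subset hc hx hy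
    simp only [hst' x hx, hst' y hy0, hρt' y hy0]
  simp only [tendsto_congr' hvt']
  constructor
  · rintro ⟨L, hL⟩
    by_contra hα
    exact not_tendsto_nhds_of_tendsto_atTop (tendsto_cevAuxV_atTop hc hσ0.ne' (not_lt.1 hα)) L hL
  · intro hα
    exact exists_tendsto_atTop_of_monotoneOn_Ici (monotoneOn_cevAuxV hc hσ0.ne')
      fun x hx => cevAuxV_le hc hσ0.ne' hα hx
end
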